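/- arXiv:2210.11368 — 2 statements merged into one kernel-verified Lean document; each statement's English description precedes it below -/
import Mathlib

section
/- For all p, q ∈ S_n(1) and every γ > 0, the entropy-regularized optimal transport value uniformly approximates the optimal transport value: 0 ≤ W(p,q) − W_γ(p,q) ≤ 2γ ln n. -/
open Finset

/-- The (non-regularized) OT value `W(p,q)`. -/
noncomputable def Wval (n : ℕ) (C : Matrix (Fin n) (Fin n) ℝ) (p q : Fin n → ℝ) : ℝ :=
  sInf ((fun π : Matrix (Fin n) (Fin n) ℝ => ∑ i, ∑ j, C i j * π i j) ''
    {π | (∀ i j, 0 ≤ π i j) ∧ (∀ i, ∑ j, π i j = p i) ∧ (∀ j, ∑ i, π i j = q j)})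

/-- The entropy-regularized OT value `W_γ(p,q)`. -/
noncomputable def Wgamma (n : ℕ) (C : Matrix (Fin n) (Fin n) ℝ) (γ : ℝ)
    (p q : Fin n → ℝ) : ℝ :=
  sInf ((fun π : Matrix (Fin n) (Fin n) ℝ =>
      (∑ i, ∑ j, C i j * π i j) + γ * ∑ i, ∑ j, π i j * Real.log (π i j)) ''
    {π | (∀ i j, 0 ≤ π i j) ∧ (∀ i, ∑ j, π i j = p i) ∧ (∀ j, ∑ i, π i j = q j)})

open Real (log negMulLog)

/-!
Every transport plan `π` is a probability vector on `Fin n × Fin n`, so its Shannon entropy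
`-H(π) = ∑ negMulLog (π i j)` lies between `0` and `log (n ^ 2) = 2 log n`, the upper bound
being Jensen's inequality for the concave function `negMulLog` with uniform weights. Hence the
regularized objective `⟨C, π⟩ + γ H(π)` lies between `⟨C, π⟩ - 2 γ log n` and `⟨C, π⟩` on
the whole feasible set, and these bounds pass to the infima.
-/

section Infimum

variable {α : Type*} {S : Set α} {f g : α → ℝ} {c : ℝ}

lemma sub_csInf_image_nonneg_and_le (hS : S.Nonempty) (hf : BddBelow (f '' S))
    (hlow : ∀ x ∈ S, f x - c ≤ g x) (hup : ∀ x ∈ S, g x ≤ f x) :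
    0 ≤ sInf (f '' S) - sInf (g '' S) ∧ sInf (f '' S) - sInf (g '' S) ≤ c := by
  obtain ⟨m, hm⟩ := hf
  have hg : BddBelow (g '' S) :=
    ⟨m - c, by rintro _ ⟨x, hx, rfl⟩; linarith [hm ⟨x, hx, rfl⟩, hlow x hx]⟩
  have hgf : sInf (g '' S) ≤ sInf (f '' S) :=
    le_csInf (hS.image f) <| by
      rintro _ ⟨x, hx, rfl⟩; exact (csInf_le hg ⟨x, hx, rfl⟩).trans (hup x hx)
  have hfg : sInf (f '' S) - c ≤ sInf (g '' S) :=
    le_csInf (hS.image g) <| by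
      rintro _ ⟨x, hx, rfl⟩; linarith [csInf_le ⟨m, hm⟩ ⟨x, hx, rfl⟩, hlow x hx]
  constructor <;> linarith

end Infimum

section Entropy

variable {ι : Type*} [Fintype ι] {w : ι → ℝ}

lemma sum_negMulLog_nonneg (hw0 : ∀ i, 0 ≤ w i) (hw1 : ∑ i, w i = 1) :
    0 ≤ ∑ i, negMulLog (w i) :=
  sum_nonneg fun i _ =>
    Real.negMulLog_nonneg (hw0 i) (hw1 ▸ single_le_sum (fun j _ => hw0 j) (mem_univ i))

lemma sum_negMulLog_le_log_card (hw0 : ∀ i, 0 ≤ w i) (hw1 : ∑ i, w i = 1) :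
    ∑ i, negMulLog (w i) ≤ log (Fintype.card ι) := by
  obtain ⟨i, -, -⟩ := exists_ne_zero_of_sum_ne_zero (hw1 ▸ one_ne_zero)
  have hN : (0 : ℝ) < Fintype.card ι := Nat.cast_pos.2 (Fintype.card_pos_iff.2 ⟨i⟩)
  have hJensen := Real.concaveOn_negMulLog.le_map_sum (t := univ)
    (w := fun _ => (Fintype.card ι : ℝ)⁻¹) (p := w)
    (fun _ _ => inv_nonneg.2 hN.le) (by simp [hN.ne']) (fun i _ => hw0 i)
  simp only [smul_eq_mul, ← mul_sum, hw1, mul_one, negMulLog, Real.log_inv] at hJensen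
  rw [neg_mul_neg] at hJensen
  exact le_of_mul_le_mul_left hJensen (inv_pos.2 hN)

end Entropy

section Transport

variable {ι κ : Type*} [Fintype ι] [Fintype κ]

def transportPlans (p : ι → ℝ) (q : κ → ℝ) : Set (Matrix ι κ ℝ) :=
  {π | (∀ i j, 0 ≤ π i j) ∧ (∀ i, ∑ j, π i j = p i) ∧ (∀ j, ∑ i, π i j = q j)}

def transportCost (C π : Matrix ι κ ℝ) : ℝ :=
  ∑ i, ∑ j, C i j * π i j

/-- The functional `H` of the regularization, i.e. minus the Shannon entropy. -/
noncomputable def negEntropy (π : Matrix ι κ ℝ) : ℝ :=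
  ∑ i, ∑ j, π i j * log (π i j)

variable {p : ι → ℝ} {q : κ → ℝ} {π : Matrix ι κ ℝ}

lemma vecMulVec_mem_transportPlans (hp0 : ∀ i, 0 ≤ p i) (hq0 : ∀ j, 0 ≤ q j)
    (hp1 : ∑ i, p i = 1) (hq1 : ∑ j, q j = 1) :
    Matrix.vecMulVec p q ∈ transportPlans p q := by
  refine ⟨fun i j => mul_nonneg (hp0 i) (hq0 j), fun i => ?_, fun j => ?_⟩
  · simp [Matrix.vecMulVec_apply, ← mul_sum, hq1]
  · simp [Matrix.vecMulVec_apply, ← sum_mul, hp1]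

lemma sum_uncurry_eq_one_of_mem_transportPlans (hπ : π ∈ transportPlans p q)
    (hp1 : ∑ i, p i = 1) : ∑ x : ι × κ, π x.1 x.2 = 1 := by
  rw [Fintype.sum_prod_type]
  simp only [hπ.2.1, hp1]

lemma negEntropy_eq_neg_sum_negMulLog (π : Matrix ι κ ℝ) :
    negEntropy π = -∑ x : ι × κ, negMulLog (π x.1 x.2) := by
  simp [negEntropy, Real.negMulLog_eq_neg, Fintype.sum_prod_type, sum_neg_distrib]

lemma negEntropy_nonpos (hπ : π ∈ transportPlans p q) (hp1 : ∑ i, p i = 1) :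
    negEntropy π ≤ 0 := by
  rw [negEntropy_eq_neg_sum_negMulLog, neg_nonpos]
  exact sum_negMulLog_nonneg (fun x => hπ.1 x.1 x.2)
    (sum_uncurry_eq_one_of_mem_transportPlans hπ hp1)

lemma neg_log_card_le_negEntropy (hπ : π ∈ transportPlans p q) (hp1 : ∑ i, p i = 1) :
    -log (Fintype.card (ι × κ)) ≤ negEntropy π := by
  rw [negEntropy_eq_neg_sum_negMulLog, neg_le_neg_iff]
  exact sum_negMulLog_le_log_card (fun x => hπ.1 x.1 x.2)
    (sum_uncurry_eq_one_of_mem_transportPlans hπ hp1)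

lemma transportCost_nonneg {C : Matrix ι κ ℝ} (hC : ∀ i j, 0 ≤ C i j)
    (hπ : ∀ i j, 0 ≤ π i j) : 0 ≤ transportCost C π :=
  sum_nonneg fun i _ => sum_nonneg fun j _ => mul_nonneg (hC i j) (hπ i j)

end Transport

theorem Wgamma_uniform_approximation_general
    (n : ℕ) (C : Matrix (Fin n) (Fin n) ℝ)
    (hC : ∀ i j, 0 ≤ C i j) (γ : ℝ) (hγ : 0 < γ)
    (p q : Fin n → ℝ)
    (hp : (∀ i, 0 ≤ p i) ∧ ∑ i, p i = 1)
    (hq : (∀ i, 0 ≤ q i) ∧ ∑ i, q i = 1) :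
    0 ≤ Wval n C p q - Wgamma n C γ p q ∧
      Wval n C p q - Wgamma n C γ p q ≤ 2 * γ * Real.log n := by
  have hlog : log (Fintype.card (Fin n × Fin n)) = 2 * log n := by
    simp [← sq, Real.log_pow]
  refine sub_csInf_image_nonneg_and_le (S := transportPlans p q) (f := transportCost C)
    (g := fun π => transportCost C π + γ * negEntropy π)
    ⟨_, vecMulVec_mem_transportPlans hp.1 hq.1 hp.2 hq.2⟩ ⟨0, ?_⟩ (fun π hπ => ?_)
    (fun π hπ => ?_)
  · rintro _ ⟨π, hπ, rfl⟩
    exact transportCost_nonneg hC hπ.1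
  · nlinarith [neg_log_card_le_negEntropy hπ hp.2]
  · nlinarith [negEntropy_nonpos hπ hp.2]

/-- the entropy-regularized OT value uniformly approximates the OT value:
`0 ≤ W(p,q) − W_γ(p,q) ≤ 2γ ln n`. -/
theorem Wgamma_uniform_approximation
    (n : ℕ) (hn : 2 ≤ n) (C : Matrix (Fin n) (Fin n) ℝ)
    (hC : ∀ i j, 0 ≤ C i j) (γ : ℝ) (hγ : 0 < γ)
    (p q : Fin n → ℝ)
    (hp : (∀ i, 0 ≤ p i) ∧ ∑ i, p i = 1)
    (hq : (∀ i, 0 ≤ q i) ∧ ∑ i, q i = 1) :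
    0 ≤ Wval n C p q - Wgamma n C γ p q ∧
      Wval n C p q - Wgamma n C γ p q ≤ 2 * γ * Real.log n :=
  Wgamma_uniform_approximation_general n C hC γ hγ p q hp hq
end

section
/- Strong duality for entropy-regularized optimal transport: for every γ > 0 and all p, q ∈ S_n(1) with strictly positive entries, the dual function f(u,v) := γ(1^T B(u,v) 1 − ⟨u,p⟩ − ⟨v,q⟩) attains its minimum over (u,v) ∈ ℝ^n × ℝ^n, and W_γ(p,q) = γ − min_{u,v ∈ ℝ^n} f(u,v). -/
/-!
Weak duality is Gibbs' inequality: for every coupling `π` and all `u, v`, the entropic cost of `π`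
exceeds `γ - f(u,v)` by `γ ∑ (π log π - π log B + B - π) ≥ 0`, where `B = B(u,v)`.

For the minimum, `f` is invariant under `(u, v) ↦ (u + c, v - c)`, and writing
`⟨u,p⟩ + ⟨v,q⟩ = ∑ pᵢ qⱼ (uᵢ + vⱼ)` turns it into a sum of the coercive one-variable functions
`a ↦ exp (a - Cᵢⱼ/γ) - pᵢ qⱼ a` evaluated at `uᵢ + vⱼ`. Normalising `v j₀ = 0`, a sublevel set
therefore lies in a compact box, where `f` attains its minimum. At a minimiser the derivatives in
`uᵢ` and `vⱼ` vanish, so `B(u,v)` has marginals `p` and `q`: it is a coupling with zero Gibbs gap.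
-/

open Finset

/-- The dual objective `f(u,v) = γ(1ᵀB(u,v)1 − ⟨u,p⟩ − ⟨v,q⟩)`
with `B(u,v)ᵢⱼ = exp(uᵢ + vⱼ − Cᵢⱼ/γ)`. -/
noncomputable def dualF (n : ℕ) (C : Matrix (Fin n) (Fin n) ℝ) (γ : ℝ)
    (p q : Fin n → ℝ) (u v : Fin n → ℝ) : ℝ :=
  γ * ((∑ i, ∑ j, Real.exp (u i + v j - C i j / γ))
    - (∑ i, u i * p i) - (∑ i, v i * q i))

open Real (exp log exp_pos exp_add log_exp log_div log_le_sub_one_of_pos hasDerivAt_exp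
  quadratic_le_exp_of_nonneg)
open scoped Matrix

theorem two_mul_le_exp (x : ℝ) : 2 * x ≤ exp x := by
  rcases le_or_gt x 0 with hx | hx
  · linarith [exp_pos x]
  · nlinarith [quadratic_le_exp_of_nonneg hx.le, sq_nonneg (x - 1)]

theorem mul_abs_le_exp_sub_mul_add {w a c : ℝ} (hw1 : w ≤ 1) :
    w * |a| ≤ exp (a - c) - w * a + 2 * |c| := by
  rcases le_or_gt 0 a with ha | ha
  · rw [abs_of_nonneg ha]
    linarith [two_mul_le_exp (a - c), le_abs_self c, mul_le_of_le_one_left ha hw1]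
  · rw [abs_of_neg ha]
    linarith [exp_pos (a - c), abs_nonneg c]

theorem mul_log_add_sub_le_mul_log {x y : ℝ} (hx : 0 ≤ x) (hy : 0 < y) :
    x * log y + x - y ≤ x * log x := by
  rcases hx.eq_or_lt with rfl | hx
  · simpa using hy.le
  · have h := mul_le_mul_of_nonneg_left (log_le_sub_one_of_pos (div_pos hy hx)) hx.le
    rw [log_div hy.ne' hx.ne', mul_sub, mul_sub, mul_div_cancel₀ _ hx.ne'] at h
    linarith

theorem eq_of_forall_exp_sub_one_mul_sub_mul_nonneg {a b : ℝ}
    (h : ∀ t, 0 ≤ (exp t - 1) * a - t * b) : a = b := by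
  have hmin : IsLocalMin (fun t => (exp t - 1) * a - t * b) 0 :=
    .of_forall fun t => by simpa using h t
  have hderiv : HasDerivAt (fun t => (exp t - 1) * a - t * b) (a - b) 0 := by
    simpa using (((hasDerivAt_exp 0).sub_const 1).mul_const a).fun_sub (hasDerivAt_mul_const b)
  linarith [hmin.hasDerivAt_eq_zero hderiv]

theorem exists_forall_le_of_forall_exists_mem_le {α : Type*} [TopologicalSpace α] [Nonempty α]
    {f : α → ℝ} {K : Set α} (hK : IsCompact K) (hf : ContinuousOn f K)
    (h : ∀ y, ∃ y' ∈ K, f y' ≤ f y) : ∃ x, ∀ y, f x ≤ f y := by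
  obtain ⟨y₀, hy₀, -⟩ := h (Classical.arbitrary α)
  obtain ⟨x, hxK, hx⟩ := hK.exists_isMinOn ⟨y₀, hy₀⟩ hf
  exact ⟨x, fun y => (h y).elim fun y' ⟨hy'K, hy'⟩ => (hx hy'K).trans hy'⟩

theorem mem_Icc_neg_iff_abs_le {ι : Type*} {w U : ι → ℝ} :
    w ∈ Set.Icc (-U) U ↔ ∀ i, |w i| ≤ U i := by
  simp only [Set.mem_Icc, Pi.le_def, Pi.neg_apply, abs_le, forall_and]

section Transport

variable {ι κ : Type*}

noncomputable def gibbsPlan (C : Matrix ι κ ℝ) (γ : ℝ) (u : ι → ℝ) (v : κ → ℝ) : Matrix ι κ ℝ :=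
  fun i j => exp (u i + v j - C i j / γ)

theorem gibbsPlan_transpose (C : Matrix ι κ ℝ) (γ : ℝ) (u : ι → ℝ) (v : κ → ℝ) :
    gibbsPlan Cᵀ γ v u = (gibbsPlan C γ u v)ᵀ := by
  ext j i
  simp only [gibbsPlan, Matrix.transpose_apply, add_comm (v j)]

variable [Fintype ι] [Fintype κ]

noncomputable def entropicCost (C : Matrix ι κ ℝ) (γ : ℝ) (π : Matrix ι κ ℝ) : ℝ :=
  (∑ i, ∑ j, C i j * π i j) + γ * ∑ i, ∑ j, π i j * log (π i j)

def couplings (p : ι → ℝ) (q : κ → ℝ) : Set (Matrix ι κ ℝ) :=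
  {π | (∀ i j, 0 ≤ π i j) ∧ (∀ i, ∑ j, π i j = p i) ∧ (∀ j, ∑ i, π i j = q j)}

theorem gibbsPlan_mem_couplings {C : Matrix ι κ ℝ} {γ : ℝ} {u : ι → ℝ} {v : κ → ℝ}
    {p : ι → ℝ} {q : κ → ℝ} (hrow : ∀ i, ∑ j, gibbsPlan C γ u v i j = p i)
    (hcol : ∀ j, ∑ i, gibbsPlan C γ u v i j = q j) : gibbsPlan C γ u v ∈ couplings p q :=
  ⟨fun _ _ => (exp_pos _).le, hrow, hcol⟩

theorem sum_sum_mul_add_of_marginals {π : Matrix ι κ ℝ} {p : ι → ℝ} {q : κ → ℝ}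
    (hrow : ∀ i, ∑ j, π i j = p i) (hcol : ∀ j, ∑ i, π i j = q j) (u : ι → ℝ) (v : κ → ℝ) :
    ∑ i, ∑ j, π i j * (u i + v j) = ∑ i, u i * p i + ∑ j, v j * q j := by
  simp only [mul_add, sum_add_distrib]
  rw [sum_comm (f := fun i j => π i j * v j)]
  simp only [← sum_mul, hrow, hcol, mul_comm]

end Transport

section Dual

variable {n : ℕ} {C : Matrix (Fin n) (Fin n) ℝ} {γ : ℝ} {p q : Fin n → ℝ}

theorem Wgamma_eq_sInf : Wgamma n C γ p q = sInf (entropicCost C γ '' couplings p q) := rfl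

theorem dualF_eq (u v : Fin n → ℝ) : dualF n C γ p q u v =
    γ * (∑ i, ∑ j, gibbsPlan C γ u v i j - ∑ i, u i * p i - ∑ i, v i * q i) := rfl

theorem entropicCost_eq_sub_dualF_add {π : Matrix (Fin n) (Fin n) ℝ} (hγ : γ ≠ 0)
    (hp1 : ∑ i, p i = 1) (hrow : ∀ i, ∑ j, π i j = p i) (hcol : ∀ j, ∑ i, π i j = q j)
    (u v : Fin n → ℝ) :
    entropicCost C γ π = γ - dualF n C γ p q u v + γ * ∑ i, ∑ j,
      (π i j * log (π i j) - (π i j * log (gibbsPlan C γ u v i j) + π i j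
        - gibbsPlan C γ u v i j)) := by
  have hlog : ∀ i j, π i j * log (gibbsPlan C γ u v i j)
      = π i j * (u i + v j) - C i j * π i j / γ := by
    intro i j
    rw [gibbsPlan, log_exp]
    field_simp
  have hmass : ∑ i, ∑ j, π i j = 1 := by simp only [hrow, hp1]
  simp only [hlog, sum_sub_distrib, sum_add_distrib, ← sum_div, hmass,
    sum_sum_mul_add_of_marginals hrow hcol, dualF_eq, entropicCost]
  field_simp
  ring

theorem sub_dualF_le_entropicCost {π : Matrix (Fin n) (Fin n) ℝ} (hγ : 0 < γ)
    (hp1 : ∑ i, p i = 1) (hπ : π ∈ couplings p q) (u v : Fin n → ℝ) :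
    γ - dualF n C γ p q u v ≤ entropicCost C γ π := by
  rw [entropicCost_eq_sub_dualF_add hγ.ne' hp1 hπ.2.1 hπ.2.2 u v]
  refine le_add_of_nonneg_right (mul_nonneg hγ.le (sum_nonneg fun i _ => sum_nonneg fun j _ => ?_))
  exact sub_nonneg.2 (mul_log_add_sub_le_mul_log (hπ.1 i j) (exp_pos _))

theorem entropicCost_gibbsPlan {u v : Fin n → ℝ} (hγ : γ ≠ 0) (hp1 : ∑ i, p i = 1)
    (hrow : ∀ i, ∑ j, gibbsPlan C γ u v i j = p i)
    (hcol : ∀ j, ∑ i, gibbsPlan C γ u v i j = q j) :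
    entropicCost C γ (gibbsPlan C γ u v) = γ - dualF n C γ p q u v := by
  simp [entropicCost_eq_sub_dualF_add hγ hp1 hrow hcol u v]

theorem dualF_transpose (u v : Fin n → ℝ) : dualF n Cᵀ γ q p v u = dualF n C γ p q u v := by
  rw [dualF_eq, dualF_eq, gibbsPlan_transpose]
  simp only [Matrix.transpose_apply]
  rw [sum_comm]
  ring

theorem dualF_add_left (u s v : Fin n → ℝ) : dualF n C γ p q (u + s) v = dualF n C γ p q u v
    + γ * ∑ i, ((exp (s i) - 1) * ∑ j, gibbsPlan C γ u v i j - s i * p i) := by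
  have hexp : ∀ i j, gibbsPlan C γ (u + s) v i j = exp (s i) * gibbsPlan C γ u v i j := by
    intro i j
    rw [gibbsPlan, gibbsPlan, ← exp_add, Pi.add_apply]
    ring_nf
  simp only [dualF_eq, hexp, ← mul_sum, Pi.add_apply, add_mul, sub_mul, sum_add_distrib,
    sum_sub_distrib, one_mul]
  ring

theorem dualF_add_const_sub_const (hp1 : ∑ i, p i = 1) (hq1 : ∑ i, q i = 1)
    (u v : Fin n → ℝ) (c : ℝ) :
    dualF n C γ p q (fun i => u i + c) (fun j => v j - c) = dualF n C γ p q u v := by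
  simp only [dualF_eq, gibbsPlan, add_add_sub_cancel, add_mul, sub_mul, sum_add_distrib,
    sum_sub_distrib, ← mul_sum, hp1, hq1]
  ring

theorem sum_gibbsPlan_row_eq_of_forall_dualF_le {u v : Fin n → ℝ} (hγ : 0 < γ)
    (hmin : ∀ u' v', dualF n C γ p q u v ≤ dualF n C γ p q u' v') (i : Fin n) :
    ∑ j, gibbsPlan C γ u v i j = p i := by
  refine eq_of_forall_exp_sub_one_mul_sub_mul_nonneg fun t => ?_
  have h := hmin (u + Pi.single i t) v
  rw [dualF_add_left, Fintype.sum_eq_single i fun k hk => by simp [Pi.single_eq_of_ne hk],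
    Pi.single_eq_same] at h
  exact (mul_nonneg_iff_of_pos_left hγ).1 (by linarith)

theorem sum_gibbsPlan_col_eq_of_forall_dualF_le {u v : Fin n → ℝ} (hγ : 0 < γ)
    (hmin : ∀ u' v', dualF n C γ p q u v ≤ dualF n C γ p q u' v') (j : Fin n) :
    ∑ i, gibbsPlan C γ u v i j = q j := by
  have h := sum_gibbsPlan_row_eq_of_forall_dualF_le (C := Cᵀ) (p := q) (q := p) hγ
    (fun u' v' => by simpa only [dualF_transpose] using hmin v' u') j
  simpa only [gibbsPlan_transpose, Matrix.transpose_apply] using h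

theorem dualF_eq_sum_sum (hp1 : ∑ i, p i = 1) (hq1 : ∑ i, q i = 1) (u v : Fin n → ℝ) :
    dualF n C γ p q u v = γ * ∑ i, ∑ j, (gibbsPlan C γ u v i j - p i * q j * (u i + v j)) := by
  have hrow : ∀ i, ∑ j, p i * q j = p i := by simp [← mul_sum, hq1]
  have hcol : ∀ j, ∑ i, p i * q j = q j := by simp [← sum_mul, hp1]
  simp only [sum_sub_distrib, sum_sum_mul_add_of_marginals hrow hcol, dualF_eq]
  ring

theorem abs_add_le_of_dualF_le {u v : Fin n → ℝ} (hγ : 0 < γ) (hp : ∀ i, 0 < p i)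
    (hp1 : ∑ i, p i = 1) (hq : ∀ j, 0 < q j) (hq1 : ∑ i, q i = 1)
    (h : dualF n C γ p q u v ≤ dualF n C γ p q 0 0) (i j : Fin n) :
    |u i + v j| ≤ (∑ k, ∑ l, (gibbsPlan C γ 0 0 k l + 2 * |C k l / γ|)) / (p i * q j) := by
  rw [le_div_iff₀' (mul_pos (hp i) (hq j))]
  set g : Fin n → Fin n → ℝ := fun k l => gibbsPlan C γ u v k l - p k * q l * (u k + v l)
    + 2 * |C k l / γ|
  have hp_le : ∀ k, p k ≤ 1 := fun k =>
    (single_le_sum (fun k _ => (hp k).le) (mem_univ k)).trans_eq hp1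
  have hq_le : ∀ l, q l ≤ 1 := fun l =>
    (single_le_sum (fun l _ => (hq l).le) (mem_univ l)).trans_eq hq1
  have hg : ∀ k l, p k * q l * |u k + v l| ≤ g k l := fun k l =>
    mul_abs_le_exp_sub_mul_add (mul_le_one₀ (hp_le k) (hq l).le (hq_le l))
  have hg0 : ∀ k l, 0 ≤ g k l := fun k l =>
    (mul_nonneg (mul_pos (hp k) (hq l)).le (abs_nonneg _)).trans (hg k l)
  have hsum : ∑ k, ∑ l, g k l ≤ ∑ k, ∑ l, (gibbsPlan C γ 0 0 k l + 2 * |C k l / γ|) := by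
    rw [dualF_eq_sum_sum hp1 hq1, dualF_eq_sum_sum hp1 hq1] at h
    simpa [g, sum_add_distrib] using le_of_mul_le_mul_left h hγ
  calc p i * q j * |u i + v j| ≤ g i j := hg i j
    _ ≤ ∑ l, g i l := single_le_sum (fun l _ => hg0 i l) (mem_univ j)
    _ ≤ ∑ k, ∑ l, g k l := single_le_sum (fun k _ => sum_nonneg fun l _ => hg0 k l) (mem_univ i)
    _ ≤ _ := hsum

theorem exists_forall_dualF_le (hγ : 0 < γ) (hp : ∀ i, 0 < p i) (hp1 : ∑ i, p i = 1)
    (hq : ∀ j, 0 < q j) (hq1 : ∑ i, q i = 1) :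
    ∃ u v, ∀ u' v', dualF n C γ p q u v ≤ dualF n C γ p q u' v' := by
  obtain ⟨j₀, -⟩ := nonempty_of_sum_ne_zero (hp1.trans_ne one_ne_zero)
  set D := ∑ k, ∑ l, (gibbsPlan C γ 0 0 k l + 2 * |C k l / γ|)
  have hbound : ∀ u v, dualF n C γ p q u v ≤ dualF n C γ p q 0 0 →
      ∀ i j, |u i + v j| ≤ D / (p i * q j) := fun _ _ => abs_add_le_of_dualF_le hγ hp hp1 hq hq1
  set U : Fin n → ℝ := fun i => D / (p i * q j₀)
  set V : Fin n → ℝ := fun j => D / (p j₀ * q j) + D / (p j₀ * q j₀)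
  set K := Set.Icc (-U) U ×ˢ Set.Icc (-V) V
  suffices hK : ∀ x : (Fin n → ℝ) × (Fin n → ℝ), ∃ y ∈ K,
      dualF n C γ p q y.1 y.2 ≤ dualF n C γ p q x.1 x.2 by
    obtain ⟨x, hx⟩ := exists_forall_le_of_forall_exists_mem_le (isCompact_Icc.prod isCompact_Icc)
      (by unfold dualF; fun_prop) hK
    exact ⟨x.1, x.2, fun u' v' => hx (u', v')⟩
  rintro ⟨u, v⟩
  by_cases hle : dualF n C γ p q 0 0 ≤ dualF n C γ p q u v
  · have hquot : ∀ i j, 0 ≤ D / (p i * q j) := fun i j =>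
      (abs_nonneg _).trans (hbound 0 0 le_rfl i j)
    refine ⟨(0, 0), ⟨mem_Icc_neg_iff_abs_le.2 fun i => ?_, mem_Icc_neg_iff_abs_le.2 fun j => ?_⟩,
      hle⟩
    · simpa [U] using hquot i j₀
    · simpa [V] using add_nonneg (hquot j₀ j) (hquot j₀ j₀)
  set u' : Fin n → ℝ := fun i => u i + v j₀
  set v' : Fin n → ℝ := fun j => v j - v j₀
  have hshift : dualF n C γ p q u' v' = dualF n C γ p q u v :=
    dualF_add_const_sub_const hp1 hq1 u v (v j₀)
  have hb := hbound u' v' (by linarith)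
  refine ⟨(u', v'), ⟨mem_Icc_neg_iff_abs_le.2 fun i => ?_, mem_Icc_neg_iff_abs_le.2 fun j => ?_⟩,
    hshift.le⟩
  · simpa [u', v'] using hb i j₀
  · calc |v' j| = |(u' j₀ + v' j) - (u' j₀ + v' j₀)| := by simp [u', v']
      _ ≤ |u' j₀ + v' j| + |u' j₀ + v' j₀| := abs_sub _ _
      _ ≤ V j := add_le_add (hb j₀ j) (hb j₀ j₀)

end Dual

theorem entropic_ot_strong_duality_general
    (n : ℕ) (C : Matrix (Fin n) (Fin n) ℝ)
    (γ : ℝ) (hγ : 0 < γ)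
    (p q : Fin n → ℝ)
    (hp : (∀ i, 0 ≤ p i) ∧ ∑ i, p i = 1) (hppos : ∀ i, 0 < p i)
    (hq : (∀ i, 0 ≤ q i) ∧ ∑ i, q i = 1) (hqpos : ∀ i, 0 < q i) :
    ∃ u v : Fin n → ℝ,
      (∀ u' v' : Fin n → ℝ, dualF n C γ p q u v ≤ dualF n C γ p q u' v') ∧
      Wgamma n C γ p q = γ - dualF n C γ p q u v := by
  obtain ⟨u, v, hmin⟩ := exists_forall_dualF_le hγ hppos hp.2 hqpos hq.2
  have hrow := sum_gibbsPlan_row_eq_of_forall_dualF_le hγ hmin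
  have hcol := sum_gibbsPlan_col_eq_of_forall_dualF_le hγ hmin
  refine ⟨u, v, hmin, ?_⟩
  rw [Wgamma_eq_sInf]
  refine IsLeast.csInf_eq ⟨⟨gibbsPlan C γ u v, gibbsPlan_mem_couplings hrow hcol,
    entropicCost_gibbsPlan hγ.ne' hp.2 hrow hcol⟩, ?_⟩
  rintro _ ⟨π, hπ, rfl⟩
  exact sub_dualF_le_entropicCost hγ hp.2 hπ u v

/-- strong duality for entropy-regularized optimal transport: the dual
function attains its minimum and `W_γ(p,q) = γ − min_{u,v} f(u,v)`. -/
theorem entropic_ot_strong_duality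
    (n : ℕ) (hn : 2 ≤ n) (C : Matrix (Fin n) (Fin n) ℝ)
    (hC : ∀ i j, 0 ≤ C i j) (γ : ℝ) (hγ : 0 < γ)
    (p q : Fin n → ℝ)
    (hp : (∀ i, 0 ≤ p i) ∧ ∑ i, p i = 1) (hppos : ∀ i, 0 < p i)
    (hq : (∀ i, 0 ≤ q i) ∧ ∑ i, q i = 1) (hqpos : ∀ i, 0 < q i) :
    ∃ u v : Fin n → ℝ,
      (∀ u' v' : Fin n → ℝ, dualF n C γ p q u v ≤ dualF n C γ p q u' v') ∧
      Wgamma n C γ p q = γ - dualF n C γ p q u v :=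
  entropic_ot_strong_duality_general n C γ hγ p q hp hppos hq hqpos
end
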